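/- Let (W_1,…,W_n) and (W_1',…,W_n') be the weighted left creation operators associated with positive regular free holomorphic functions f and f' with coefficient sequences b_α, b_α'. There exists an invertible operator X on F²(H_n) with W_i = X^{-1} W_i' X for all i if and only if there exist constants 0 < C_1 ≤ C_2 such that C_1 ≤ b_α / b_α' ≤ C_2 for all α ∈ F_n^+. Moreover X can be chosen with max{‖X‖, ‖X^{-1}‖} ≤ max{1/C_1, C_2}. -/

import Mathlib

open Filter Topology
open scoped ComplexConjugate ENNReal

namespace NCDomain

/-- Words in the free monoid `F_n^+` on `n` generators. -/
abbrev Word (n : ℕ) := FreeMonoid (Fin n)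

instance {n : ℕ} : DecidableEq (Word n) :=
  inferInstanceAs (DecidableEq (List (Fin n)))

/-- The length `|α|` of a word. -/
def wordLen {n : ℕ} (α : Word n) : ℕ := FreeMonoid.length α

/-- The coefficients `b_α`, defined by `b_{g_0} = 1` and, for `|α| ≥ 1`,
`b_α = Σ_{j=1}^{|α|} Σ_{γ_1⋯γ_j = α, |γ_i| ≥ 1} a_{γ_1}⋯a_{γ_j}`, the sum running over
all ordered factorizations of `α` into nonempty words. -/
noncomputable def bCoeff {n : ℕ} (a : Word n → ℝ) (α : Word n) : ℝ :=
  if α = 1 then 1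
  else ∑' L : {L : List (Word n) // L.prod = α ∧ ∀ w ∈ L, w ≠ 1}, (L.1.map a).prod

/-- `f = Σ_{|α|≥1} a_α X_α` is a positive regular free holomorphic function:
`a_{g_0} = 0`, `a_α ≥ 0`, `a_{g_i} > 0`, and
`limsup_{k→∞} (Σ_{|α|=k} |a_α|²)^{1/(2k)} < ∞`. -/
def PosRegular {n : ℕ} (a : Word n → ℝ) : Prop :=
  a 1 = 0 ∧ (∀ α, 0 ≤ a α) ∧ (∀ i : Fin n, 0 < a (FreeMonoid.of i)) ∧
    ∃ C : ℝ, ∀ᶠ k in atTop,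
      (∑' α : {β : Word n // wordLen β = k}, (a α.1) ^ 2) ≤ C ^ (2 * k)

/-- For a tuple `T` of operators and a word `α = g_{i_1}⋯g_{i_k}`,
the product `T_α = T_{i_1}⋯T_{i_k}` (and `T_{g_0} = I`). -/
noncomputable def opWord {n : ℕ} {H : Type*} [NormedAddCommGroup H] [NormedSpace ℂ H]
    (T : Fin n → H →L[ℂ] H) (α : Word n) : H →L[ℂ] H :=
  ((FreeMonoid.toList α).map T).prod

/-- The full Fock space `F²(H_n)`, realized as `ℓ²` over the free monoid. -/
abbrev Fock (n : ℕ) : Type := lp (fun _ : Word n => ℂ) 2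

/-- The canonical orthonormal basis vector `e_α` of the Fock space. -/
noncomputable def fockBasis {n : ℕ} (α : Word n) : Fock n := lp.single 2 α (1 : ℂ)

/-- `W` is the tuple of weighted left creation operators associated with `f = Σ a_α X_α`:
`W_i e_α = √(b_α / b_{g_i α}) e_{g_i α}`. -/
def IsWeightedShift {n : ℕ} (a : Word n → ℝ) (W : Fin n → Fock n →L[ℂ] Fock n) : Prop :=
  ∀ (i : Fin n) (α : Word n),
    W i (fockBasis α) =
      (Real.sqrt (bCoeff a α / bCoeff a (FreeMonoid.of i * α)) : ℂ) •
        fockBasis (FreeMonoid.of i * α)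

variable {n : ℕ}

lemma toList_listProd (L : List (Word n)) :
    FreeMonoid.toList L.prod = (L.map FreeMonoid.toList).flatten := by
  induction L with
  | nil => rfl
  | cons w L ih => simp [List.prod_cons, FreeMonoid.toList_mul, ih]

lemma toList_ne_nil {w : Word n} (hw : w ≠ 1) : FreeMonoid.toList w ≠ [] := by
  intro h
  exact hw (FreeMonoid.toList.injective (by simpa using h))

/-- splitting lemma: two lists of nonempty lists with the same flatten and same lengths agree -/
lemma parts_eq {β : Type*} (L₁ L₂ : List (List β)) (hf : L₁.flatten = L₂.flatten)
    (hb : L₁.map List.length = L₂.map List.length)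
    (hp : ∀ w ∈ L₁, w ≠ []) : L₁ = L₂ := by
  have hp₂ : ∀ w ∈ L₂, w ≠ [] := by
    intro w hw
    have : w.length ∈ L₂.map List.length := List.mem_map_of_mem hw
    rw [← hb] at this
    obtain ⟨u, hu, hul⟩ := List.mem_map.1 this
    intro h0
    rw [h0] at hul
    exact hp u hu (List.length_eq_zero_iff.1 (by simpa using hul))
  set c₁ : Composition L₁.flatten.length :=
    ⟨L₁.map List.length, by
      intro i hi
      obtain ⟨u, hu, rfl⟩ := List.mem_map.1 hi
      exact List.length_pos_iff.2 (hp u hu), by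
      simp [List.length_flatten]⟩ with hc₁
  set c₂ : Composition L₂.flatten.length :=
    ⟨L₂.map List.length, by
      intro i hi
      obtain ⟨u, hu, rfl⟩ := List.mem_map.1 hi
      exact List.length_pos_iff.2 (hp₂ u hu), by
      simp [List.length_flatten]⟩ with hc₂
  have e₁ : L₁.flatten.splitWrtComposition c₁ = L₁ :=
    List.splitWrtComposition_flatten L₁ c₁ rfl
  have e₂ : L₂.flatten.splitWrtComposition c₂ = L₂ :=
    List.splitWrtComposition_flatten L₂ c₂ rfl
  rw [← e₁, ← e₂]
  show List.splitWrtCompositionAux L₁.flatten (L₁.map List.length)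
      = List.splitWrtCompositionAux L₂.flatten (L₂.map List.length)
  rw [hf, hb]

lemma factorizations_finite (α : Word n) :
    Finite {L : List (Word n) // L.prod = α ∧ ∀ w ∈ L, w ≠ 1} := by
  apply Finite.of_injective
    (f := fun L : {L : List (Word n) // L.prod = α ∧ ∀ w ∈ L, w ≠ 1} =>
      (⟨(L.1.map FreeMonoid.toList).map List.length, by
        intro i hi
        obtain ⟨u, hu, rfl⟩ := List.mem_map.1 hi
        obtain ⟨w, hw, rfl⟩ := List.mem_map.1 hu
        exact List.length_pos_iff.2 (toList_ne_nil (L.2.2 w hw)), by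
        rw [← List.length_flatten, ← toList_listProd, L.2.1]⟩ :
        Composition (FreeMonoid.toList α).length))
  intro L₁ L₂ h
  have hb : (L₁.1.map FreeMonoid.toList).map List.length
      = (L₂.1.map FreeMonoid.toList).map List.length := congrArg Composition.blocks h
  have hf : (L₁.1.map FreeMonoid.toList).flatten = (L₂.1.map FreeMonoid.toList).flatten := by
    rw [← toList_listProd, ← toList_listProd, L₁.2.1, L₂.2.1]
  have := parts_eq _ _ hf hb (by
    intro w hw
    obtain ⟨u, hu, rfl⟩ := List.mem_map.1 hw
    exact toList_ne_nil (L₁.2.2 u hu))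
  apply Subtype.ext
  exact List.map_injective_iff.2 FreeMonoid.toList.injective this

lemma bCoeff_one (a : Word n → ℝ) : bCoeff a 1 = 1 := if_pos rfl

lemma bCoeff_pos {a : Word n → ℝ} (ha : PosRegular a) (α : Word n) : 0 < bCoeff a α := by
  unfold bCoeff
  split
  · exact one_pos
  · rename_i hα
    have : Finite {L : List (Word n) // L.prod = α ∧ ∀ w ∈ L, w ≠ 1} :=
      factorizations_finite α
    have hmem : ((FreeMonoid.toList α).map FreeMonoid.of).prod = α ∧
        ∀ w ∈ (FreeMonoid.toList α).map FreeMonoid.of, w ≠ 1 := by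
      constructor
      · apply FreeMonoid.toList.injective
        rw [toList_listProd]
        induction (FreeMonoid.toList α) with
        | nil => rfl
        | cons i l ih => simpa [FreeMonoid.toList_of] using ih
      · intro w hw
        obtain ⟨i, _, rfl⟩ := List.mem_map.1 hw
        exact FreeMonoid.of_ne_one i
    refine Summable.tsum_pos (Summable.of_finite) (fun L => List.prod_nonneg ?_) ⟨_, hmem⟩
      (List.prod_pos ?_)
    · intro x hx
      obtain ⟨w, _, rfl⟩ := List.mem_map.1 hx
      exact ha.2.1 w
    · intro x hx
      obtain ⟨w, hw, rfl⟩ := List.mem_map.1 hx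
      obtain ⟨i, _, rfl⟩ := List.mem_map.1 hw
      exact ha.2.2.1 i

/-- coordinate functional -/
noncomputable def coordL (γ : Word n) : Fock n →L[ℂ] ℂ :=
  LinearMap.mkContinuous
    { toFun := fun f => f γ
      map_add' := fun f g => by simp [lp.coeFn_add]
      map_smul' := fun c f => by simp [lp.coeFn_smul] }
    1 (fun f => by
      show ‖f γ‖ ≤ 1 * ‖f‖
      simpa using lp.norm_apply_le_norm (by norm_num : (2 : ℝ≥0∞) ≠ 0) f γ)

@[simp] lemma coordL_apply (γ : Word n) (f : Fock n) : coordL γ f = f γ := rfl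

lemma fockBasis_apply (α γ : Word n) :
    (fockBasis (n := n) α) γ = if γ = α then 1 else 0 := by
  unfold fockBasis
  rw [lp.single_apply]
  split <;> simp_all

lemma norm_fockBasis (α : Word n) : ‖fockBasis (n := n) α‖ = 1 := by
  have := lp.norm_single (p := 2) (E := fun _ : Word n => ℂ) (by norm_num)
    α (1 : ℂ)
  simpa [fockBasis] using this

lemma single_eq_smul_fockBasis (β : Word n) (c : ℂ) :
    lp.single (E := fun _ : Word n => ℂ) 2 β c = c • fockBasis β := by
  have := lp.single_smul (E := fun _ : Word n => ℂ) 2 β c (1 : ℂ)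
  simpa [fockBasis] using this

lemma hasSum_coord (T : Fock n →L[ℂ] Fock n) (v : Fock n) (γ : Word n) :
    HasSum (fun β : Word n => v β * (T (fockBasis β)) γ) ((T v) γ) := by
  have h := lp.hasSum_single (E := fun _ : Word n => ℂ) (p := 2) (by norm_num) v
  have h2 := h.mapL ((coordL γ).comp T)
  convert h2 using 2 with β
  rw [ContinuousLinearMap.comp_apply, single_eq_smul_fockBasis, map_smul]
  simp [lp.coeFn_smul]
  rfl

lemma clm_ext_basis {T S : Fock n →L[ℂ] Fock n}
    (h : ∀ β, T (fockBasis β) = S (fockBasis β)) : T = S := by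
  refine ContinuousLinearMap.ext fun v => ?_
  apply lp.ext
  funext γ
  exact (hasSum_coord T v γ).unique (by simpa only [h] using hasSum_coord S v γ)

lemma opWord_one {H : Type*} [NormedAddCommGroup H] [NormedSpace ℂ H]
    (T : Fin n → H →L[ℂ] H) : opWord T 1 = 1 := rfl

lemma opWord_of_mul {H : Type*} [NormedAddCommGroup H] [NormedSpace ℂ H]
    (T : Fin n → H →L[ℂ] H) (i : Fin n) (α : Word n) :
    opWord T (FreeMonoid.of i * α) = (T i) ∘L opWord T α := rfl

lemma mul_one_iff {β γ : Word n} (h : β * γ = β) : γ = 1 := by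
  have := congrArg FreeMonoid.length h
  rw [FreeMonoid.length_mul] at this
  exact FreeMonoid.length_eq_zero.1 (by omega)

lemma mul_ne_one {β γ : Word n} (hβ : β ≠ 1) : β * γ ≠ 1 := by
  intro h
  have := congrArg FreeMonoid.length h
  rw [FreeMonoid.length_mul] at this
  simp only [FreeMonoid.length_one] at this
  exact hβ (FreeMonoid.length_eq_zero.1 (by omega))

section Shift

variable {a a' : Word n → ℝ} {W W' : Fin n → Fock n →L[ℂ] Fock n}

lemma opWord_apply_basis (ha : PosRegular a) (hW : IsWeightedShift a W) (α β : Word n) :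
    opWord W α (fockBasis β) =
      (Real.sqrt (bCoeff a β / bCoeff a (α * β)) : ℂ) • fockBasis (α * β) := by
  induction α using FreeMonoid.recOn with
  | one =>
    rw [opWord_one, one_mul]
    simp [div_self (bCoeff_pos ha β).ne']
  | of_mul i xs ih =>
    rw [opWord_of_mul, ContinuousLinearMap.comp_apply, ih, map_smul, hW i (xs * β),
      smul_smul, mul_assoc]
    congr 1
    rw [← Complex.ofReal_mul, ← Real.sqrt_mul (div_nonneg (bCoeff_pos ha β).le
      (bCoeff_pos ha (xs * β)).le)]
    congr 2
    rw [div_mul_div_comm, mul_comm (bCoeff a (xs * β)),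
      mul_div_mul_right _ _ (bCoeff_pos ha (xs * β)).ne']

lemma intertwine_opWord (Y : Fock n →L[ℂ] Fock n)
    (hY : ∀ i, Y ∘L W i = W' i ∘L Y) (α : Word n) :
    Y ∘L opWord W α = opWord W' α ∘L Y := by
  induction α using FreeMonoid.recOn with
  | one =>
    rw [opWord_one]
    show Y * 1 = 1 * Y
    rw [mul_one, one_mul]
  | of_mul i xs ih =>
    rw [opWord_of_mul, opWord_of_mul, ← ContinuousLinearMap.comp_assoc, hY i,
      ContinuousLinearMap.comp_assoc, ih, ContinuousLinearMap.comp_assoc]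

lemma intertwine_basis (ha : PosRegular a) (hW : IsWeightedShift a W)
    (Y : Fock n →L[ℂ] Fock n) (hY : ∀ i, Y ∘L W i = W' i ∘L Y) (β : Word n) :
    Y (fockBasis β) = (Real.sqrt (bCoeff a β) : ℂ) • opWord W' β (Y (fockBasis 1)) := by
  have h1 : fockBasis (n := n) β
      = (Real.sqrt (bCoeff a β) : ℂ) • opWord W β (fockBasis 1) := by
    rw [opWord_apply_basis ha hW, mul_one, bCoeff_one, smul_smul, ← Complex.ofReal_mul,
      ← Real.sqrt_mul (bCoeff_pos ha β).le, mul_one_div, div_self (bCoeff_pos ha β).ne']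
    simp
  calc Y (fockBasis β) = Y ((Real.sqrt (bCoeff a β) : ℂ) • opWord W β (fockBasis 1)) := by
        rw [← h1]
    _ = (Real.sqrt (bCoeff a β) : ℂ) • (Y ∘L opWord W β) (fockBasis 1) := by
        rw [map_smul]; rfl
    _ = _ := by rw [intertwine_opWord Y hY]; rfl

/-- diagonal coordinate of `Y e_β`. -/
lemma coord_diag (ha : PosRegular a) (ha' : PosRegular a')
    (hW : IsWeightedShift a W) (hW' : IsWeightedShift a' W')
    (Y : Fock n →L[ℂ] Fock n) (hY : ∀ i, Y ∘L W i = W' i ∘L Y) (β : Word n) :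
    (Y (fockBasis β)) β =
      (Real.sqrt (bCoeff a β / bCoeff a' β) : ℂ) * (Y (fockBasis 1)) 1 := by
  set v := Y (fockBasis 1) with hv
  have hsum := hasSum_coord (opWord W' β) v β
  have hterm : (fun γ : Word n => v γ * (opWord W' β (fockBasis γ)) β)
      = fun γ => if γ = 1 then v 1 * (Real.sqrt (1 / bCoeff a' β) : ℂ) else 0 := by
    funext γ
    rw [opWord_apply_basis ha' hW', lp.coeFn_smul, Pi.smul_apply, fockBasis_apply]
    by_cases hγ : γ = 1
    · subst hγ
      simp [bCoeff_one, smul_eq_mul]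
    · rw [if_neg, smul_zero, mul_zero, if_neg hγ]
      intro h
      exact hγ (mul_one_iff h.symm)
  have h2 : (opWord W' β v) β = v 1 * (Real.sqrt (1 / bCoeff a' β) : ℂ) := by
    rw [hterm] at hsum
    exact hsum.unique (hasSum_ite_eq 1 _)
  have key : (Real.sqrt (bCoeff a β) : ℂ) * (Real.sqrt (1 / bCoeff a' β) : ℂ)
      = (Real.sqrt (bCoeff a β / bCoeff a' β) : ℂ) := by
    rw [← Complex.ofReal_mul, ← Real.sqrt_mul (bCoeff_pos ha β).le, mul_one_div]
  rw [intertwine_basis ha hW Y hY β, lp.coeFn_smul, Pi.smul_apply, ← hv, h2, smul_eq_mul,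
    mul_left_comm, key, mul_comm]

/-- vacuum coordinate of `Y e_β` vanishes for `β ≠ 1`. -/
lemma coord_vac (ha : PosRegular a) (ha' : PosRegular a')
    (hW : IsWeightedShift a W) (hW' : IsWeightedShift a' W')
    (Y : Fock n →L[ℂ] Fock n) (hY : ∀ i, Y ∘L W i = W' i ∘L Y) {β : Word n} (hβ : β ≠ 1) :
    (Y (fockBasis β)) 1 = 0 := by
  set v := Y (fockBasis 1) with hv
  have hsum := hasSum_coord (opWord W' β) v 1
  have hterm : (fun γ : Word n => v γ * (opWord W' β (fockBasis γ)) 1)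
      = fun _ => (0 : ℂ) := by
    funext γ
    rw [opWord_apply_basis ha' hW', lp.coeFn_smul, Pi.smul_apply, fockBasis_apply,
      if_neg (fun h => mul_ne_one hβ h.symm), smul_zero, mul_zero]
  have h2 : (opWord W' β v) 1 = 0 := by
    rw [hterm] at hsum
    exact hsum.unique hasSum_zero
  rw [intertwine_basis ha hW Y hY β, lp.coeFn_smul, Pi.smul_apply, ← hv, h2, smul_zero]

end Shift

section Fwd

variable {a a' : Word n → ℝ} {W W' : Fin n → Fock n →L[ℂ] Fock n}

lemma diag_bound (ha : PosRegular a) (ha' : PosRegular a')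
    (hW : IsWeightedShift a W) (hW' : IsWeightedShift a' W')
    (Y : Fock n →L[ℂ] Fock n) (hY : ∀ i, Y ∘L W i = W' i ∘L Y) (α : Word n) :
    Real.sqrt (bCoeff a α / bCoeff a' α) * ‖(Y (fockBasis 1)) 1‖ ≤ ‖Y‖ := by
  have h1 : ‖(Y (fockBasis α)) α‖ ≤ ‖Y‖ := by
    refine (lp.norm_apply_le_norm (by norm_num : (2 : ℝ≥0∞) ≠ 0) _ α).trans ?_
    calc ‖Y (fockBasis α)‖ ≤ ‖Y‖ * ‖fockBasis (n := n) α‖ := Y.le_opNorm _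
      _ = ‖Y‖ := by rw [norm_fockBasis, mul_one]
  rw [coord_diag ha ha' hW hW' Y hY α] at h1
  rw [norm_mul] at h1
  calc Real.sqrt (bCoeff a α / bCoeff a' α) * ‖(Y (fockBasis 1)) 1‖
      = ‖(Real.sqrt (bCoeff a α / bCoeff a' α) : ℂ)‖ * ‖(Y (fockBasis 1)) 1‖ := by
        rw [Complex.norm_real, Real.norm_eq_abs, abs_of_nonneg (Real.sqrt_nonneg _)]
    _ ≤ ‖Y‖ := h1

lemma fwd_main (ha : PosRegular a) (ha' : PosRegular a')
    (hW : IsWeightedShift a W) (hW' : IsWeightedShift a' W')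
    (X : Fock n ≃L[ℂ] Fock n)
    (hX : ∀ i, W i = (X.symm : Fock n →L[ℂ] Fock n) ∘L (W' i ∘L (X : Fock n →L[ℂ] Fock n))) :
    ∃ C₁ C₂ : ℝ, 0 < C₁ ∧ ∀ α : Word n,
      C₁ ≤ bCoeff a α / bCoeff a' α ∧ bCoeff a α / bCoeff a' α ≤ C₂ := by
  have hXW : ∀ i, (X : Fock n →L[ℂ] Fock n) ∘L W i
      = W' i ∘L (X : Fock n →L[ℂ] Fock n) := by
    intro i
    ext v
    simp [hX i]
  have hXW' : ∀ i, (X.symm : Fock n →L[ℂ] Fock n) ∘L W' i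
      = W i ∘L (X.symm : Fock n →L[ℂ] Fock n) := by
    intro i
    ext v
    simp [hX i]
  set c := ((X : Fock n →L[ℂ] Fock n) (fockBasis 1)) 1 with hc
  set d := ((X.symm : Fock n →L[ℂ] Fock n) (fockBasis 1)) 1 with hd
  have hcd : c * d = 1 := by
    have h0 : ((X.symm : Fock n →L[ℂ] Fock n)
        ((X : Fock n →L[ℂ] Fock n) (fockBasis 1))) 1 = 1 := by
      have h1 : (X.symm : Fock n →L[ℂ] Fock n) ((X : Fock n →L[ℂ] Fock n) (fockBasis 1))
          = fockBasis 1 := X.symm_apply_apply _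
      rw [h1, fockBasis_apply, if_pos rfl]
    have hsum := hasSum_coord (X.symm : Fock n →L[ℂ] Fock n)
      ((X : Fock n →L[ℂ] Fock n) (fockBasis 1)) 1
    have hterm : (fun β : Word n => ((X : Fock n →L[ℂ] Fock n) (fockBasis 1)) β *
        ((X.symm : Fock n →L[ℂ] Fock n) (fockBasis β)) 1)
        = fun β => if β = 1 then c * d else 0 := by
      funext β
      by_cases hβ : β = 1
      · subst hβ
        rw [if_pos rfl]
      · rw [coord_vac ha' ha hW' hW _ hXW' hβ, mul_zero, if_neg hβ]
    rw [hterm] at hsum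
    rw [h0] at hsum
    exact (hsum.unique (hasSum_ite_eq 1 _)).symm
  have hc0 : c ≠ 0 := fun h => by simp [h] at hcd
  have hd0 : d ≠ 0 := fun h => by simp [h] at hcd
  have hcb := diag_bound ha ha' hW hW' _ hXW
  have hdb := diag_bound ha' ha hW' hW _ hXW'
  have hnc : 0 < ‖c‖ := norm_pos_iff.2 hc0
  have hnd : 0 < ‖d‖ := norm_pos_iff.2 hd0
  have hnX : 0 < ‖(X.symm : Fock n →L[ℂ] Fock n)‖ := by
    have := hdb 1
    rw [bCoeff_one, bCoeff_one] at this
    simp only [div_one, Real.sqrt_one, one_mul] at this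
    exact hnd.trans_le this
  refine ⟨1 / (‖(X.symm : Fock n →L[ℂ] Fock n)‖ / ‖d‖) ^ 2,
    (‖(X : Fock n →L[ℂ] Fock n)‖ / ‖c‖) ^ 2,
    by positivity, fun α => ⟨?_, ?_⟩⟩
  · have h1 : Real.sqrt (bCoeff a' α / bCoeff a α)
        ≤ ‖(X.symm : Fock n →L[ℂ] Fock n)‖ / ‖d‖ :=
      (le_div_iff₀ hnd).2 (hdb α)
    have h2 : bCoeff a' α / bCoeff a α ≤ (‖(X.symm : Fock n →L[ℂ] Fock n)‖ / ‖d‖) ^ 2 := by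
      have := pow_le_pow_left₀ (Real.sqrt_nonneg _) h1 2
      rwa [Real.sq_sqrt (div_nonneg (bCoeff_pos ha' α).le (bCoeff_pos ha α).le)] at this
    have h3 : 0 < bCoeff a' α / bCoeff a α :=
      div_pos (bCoeff_pos ha' α) (bCoeff_pos ha α)
    calc 1 / (‖(X.symm : Fock n →L[ℂ] Fock n)‖ / ‖d‖) ^ 2
        ≤ 1 / (bCoeff a' α / bCoeff a α) := one_div_le_one_div_of_le h3 h2
      _ = bCoeff a α / bCoeff a' α := one_div_div _ _
  · have h1 : Real.sqrt (bCoeff a α / bCoeff a' α)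
        ≤ ‖(X : Fock n →L[ℂ] Fock n)‖ / ‖c‖ :=
      (le_div_iff₀ hnc).2 (hcb α)
    have := pow_le_pow_left₀ (Real.sqrt_nonneg _) h1 2
    rwa [Real.sq_sqrt (div_nonneg (bCoeff_pos ha α).le (bCoeff_pos ha' α).le)] at this

end Fwd

section Diag

lemma two_toReal : ((2 : ℝ≥0∞)).toReal = 2 := by norm_num

lemma diag_memℓp (g : Word n → ℂ) (M : ℝ) (hg : ∀ γ, ‖g γ‖ ≤ M) (f : Fock n) :
    Memℓp (fun γ => g γ * f γ) 2 := by
  apply memℓp_gen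
  have hM0 : 0 ≤ M := (norm_nonneg (g 1)).trans (hg 1)
  have hf : Summable fun γ : Word n => ‖f γ‖ ^ (2 : ℝ≥0∞).toReal :=
    (lp.memℓp f).summable (by norm_num)
  refine Summable.of_nonneg_of_le (fun γ => Real.rpow_nonneg (norm_nonneg _) _)
    (fun γ => ?_) (hf.mul_left (M ^ (2 : ℝ≥0∞).toReal))
  rw [← Real.mul_rpow hM0 (norm_nonneg _)]
  apply Real.rpow_le_rpow (norm_nonneg _) _ (by norm_num)
  rw [norm_mul]
  exact mul_le_mul_of_nonneg_right (hg γ) (norm_nonneg _)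

noncomputable def diagOp (g : Word n → ℂ) (M : ℝ) (hg : ∀ γ, ‖g γ‖ ≤ M) :
    Fock n →L[ℂ] Fock n :=
  LinearMap.mkContinuous
    { toFun := fun f => (⟨fun γ => g γ * f γ, diag_memℓp g M hg f⟩ : Fock n)
      map_add' := fun f h => by
        apply lp.ext
        funext γ
        simp only [lp.coeFn_add, Pi.add_apply]
        show g γ * (f γ + h γ) = g γ * f γ + g γ * h γ
        ring
      map_smul' := fun c f => by
        apply lp.ext
        funext γ
        simp only [lp.coeFn_smul, Pi.smul_apply, RingHom.id_apply]
        show g γ * (c • f γ) = c • (g γ * f γ)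
        simp [smul_eq_mul]
        ring }
    M (fun f => by
      have hM0 : 0 ≤ M := (norm_nonneg (g 1)).trans (hg 1)
      have h2 : (0 : ℝ) < (2 : ℝ≥0∞).toReal := by norm_num
      set Df : Fock n := ⟨fun γ => g γ * f γ, diag_memℓp g M hg f⟩ with hDf
      show ‖Df‖ ≤ M * ‖f‖
      rw [← Real.rpow_le_rpow_iff (norm_nonneg Df) (by positivity) h2,
        lp.norm_rpow_eq_tsum h2 Df, Real.mul_rpow hM0 (norm_nonneg f),
        lp.norm_rpow_eq_tsum h2 f]
      rw [← tsum_mul_left]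
      apply Summable.tsum_le_tsum _ _ (((lp.memℓp f).summable h2).mul_left _)
      · intro γ
        show ‖g γ * f γ‖ ^ (2 : ℝ≥0∞).toReal ≤ _
        rw [← Real.mul_rpow hM0 (norm_nonneg _)]
        apply Real.rpow_le_rpow (norm_nonneg _) _ h2.le
        rw [norm_mul]
        exact mul_le_mul_of_nonneg_right (hg γ) (norm_nonneg _)
      · exact (lp.memℓp Df).summable h2)

lemma diagOp_apply (g : Word n → ℂ) (M : ℝ) (hg : ∀ γ, ‖g γ‖ ≤ M) (f : Fock n) (γ : Word n) :
    (diagOp g M hg f) γ = g γ * f γ := rfl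

lemma diagOp_norm_le (g : Word n → ℂ) (M : ℝ) (hg : ∀ γ, ‖g γ‖ ≤ M) :
    ‖diagOp g M hg‖ ≤ M :=
  LinearMap.mkContinuous_norm_le _ ((norm_nonneg (g 1)).trans (hg 1)) _

lemma diagOp_basis (g : Word n → ℂ) (M : ℝ) (hg : ∀ γ, ‖g γ‖ ≤ M) (β : Word n) :
    diagOp g M hg (fockBasis β) = g β • fockBasis β := by
  apply lp.ext
  funext γ
  rw [diagOp_apply, lp.coeFn_smul, Pi.smul_apply, fockBasis_apply, smul_eq_mul]
  by_cases h : γ = β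
  · subst h; simp
  · simp [h]

end Diag

section Bwd

variable {a a' : Word n → ℝ} {W W' : Fin n → Fock n →L[ℂ] Fock n}

lemma bwd_main (ha : PosRegular a) (ha' : PosRegular a')
    (hW : IsWeightedShift a W) (hW' : IsWeightedShift a' W')
    (C₁ C₂ : ℝ) (hC₁ : 0 < C₁)
    (hC : ∀ α : Word n, C₁ ≤ bCoeff a α / bCoeff a' α ∧ bCoeff a α / bCoeff a' α ≤ C₂) :
    ∃ X : Fock n ≃L[ℂ] Fock n,
      (∀ i : Fin n,
        W i = (X.symm : Fock n →L[ℂ] Fock n) ∘L (W' i ∘L (X : Fock n →L[ℂ] Fock n))) ∧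
      max ‖(X : Fock n →L[ℂ] Fock n)‖ ‖(X.symm : Fock n →L[ℂ] Fock n)‖
        ≤ max (1 / C₁) C₂ := by
  set r : Word n → ℝ := fun γ => Real.sqrt (bCoeff a γ / bCoeff a' γ) with hr
  have hrpos : ∀ γ, 0 < r γ := fun γ =>
    Real.sqrt_pos.2 (div_pos (bCoeff_pos ha γ) (bCoeff_pos ha' γ))
  have hrle : ∀ γ, r γ ≤ Real.sqrt C₂ := fun γ => Real.sqrt_le_sqrt (hC γ).2
  have hrge : ∀ γ, Real.sqrt C₁ ≤ r γ := fun γ => Real.sqrt_le_sqrt (hC γ).1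
  have hC₁s : 0 < Real.sqrt C₁ := Real.sqrt_pos.2 hC₁
  have hg : ∀ γ, ‖((r γ : ℝ) : ℂ)‖ ≤ Real.sqrt C₂ := fun γ => by
    rw [Complex.norm_real, Real.norm_eq_abs, abs_of_nonneg (hrpos γ).le]
    exact hrle γ
  have hg' : ∀ γ, ‖(((r γ)⁻¹ : ℝ) : ℂ)‖ ≤ (Real.sqrt C₁)⁻¹ := fun γ => by
    rw [Complex.norm_real, Real.norm_eq_abs, abs_of_nonneg (inv_nonneg.2 (hrpos γ).le)]
    exact inv_anti₀ hC₁s (hrge γ)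
  set D : Fock n →L[ℂ] Fock n := diagOp _ _ hg with hD
  set D' : Fock n →L[ℂ] Fock n := diagOp _ _ hg' with hD'
  have hinv1 : Function.LeftInverse D' D := by
    intro f
    apply lp.ext
    funext γ
    show (((r γ)⁻¹ : ℝ) : ℂ) * (((r γ : ℝ) : ℂ) * f γ) = f γ
    rw [← mul_assoc, ← Complex.ofReal_mul, inv_mul_cancel₀ (hrpos γ).ne',
      Complex.ofReal_one, one_mul]
  have hinv2 : Function.RightInverse D' D := by
    intro f
    apply lp.ext
    funext γ
    show (((r γ : ℝ)) : ℂ) * ((((r γ)⁻¹ : ℝ) : ℂ) * f γ) = f γ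
    rw [← mul_assoc, ← Complex.ofReal_mul, mul_inv_cancel₀ (hrpos γ).ne',
      Complex.ofReal_one, one_mul]
  set X : Fock n ≃L[ℂ] Fock n := ContinuousLinearEquiv.equivOfInverse D D' hinv1 hinv2
    with hX
  have hcoe : (X : Fock n →L[ℂ] Fock n) = D := by
    ext v
    rfl
  have hcoe' : (X.symm : Fock n →L[ℂ] Fock n) = D' := by
    ext v
    rfl
  have hone : C₁ ≤ 1 ∧ 1 ≤ C₂ := by
    have := hC 1
    rw [bCoeff_one, bCoeff_one, div_one] at this
    exact this
  refine ⟨X, ?_, ?_⟩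
  · intro i
    apply clm_ext_basis
    intro β
    rw [ContinuousLinearMap.comp_apply, ContinuousLinearMap.comp_apply, hcoe, hcoe',
      hD, diagOp_basis, map_smul, hW' i β, hD', map_smul, map_smul, diagOp_basis,
      hW i β, smul_smul, smul_smul]
    congr 1
    have hb := bCoeff_pos ha β
    have hb' := bCoeff_pos ha' β
    have hbi := bCoeff_pos ha (FreeMonoid.of i * β)
    have hbi' := bCoeff_pos ha' (FreeMonoid.of i * β)
    have key : r β * (Real.sqrt (bCoeff a' β / bCoeff a' (FreeMonoid.of i * β)) *
        (r (FreeMonoid.of i * β))⁻¹)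
        = Real.sqrt (bCoeff a β / bCoeff a (FreeMonoid.of i * β)) := by
      rw [hr]
      rw [← Real.sqrt_inv, ← Real.sqrt_mul (div_nonneg hb'.le hbi'.le),
        ← Real.sqrt_mul (div_nonneg hb.le hb'.le)]
      congr 1
      field_simp
    rw [← key]
    push_cast
    ring
  · have hs2 : Real.sqrt C₂ ≤ C₂ := by
      nlinarith [Real.mul_self_sqrt (le_trans zero_le_one hone.2),
        Real.sqrt_nonneg C₂, hone.2]
    have hs1 : C₁ ≤ Real.sqrt C₁ := by
      nlinarith [Real.mul_self_sqrt hC₁.le, Real.sqrt_nonneg C₁, hone.1, hC₁]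
    have h1 : ‖(X : Fock n →L[ℂ] Fock n)‖ ≤ C₂ := by
      rw [hcoe]
      exact (diagOp_norm_le _ _ hg).trans hs2
    have h2 : ‖(X.symm : Fock n →L[ℂ] Fock n)‖ ≤ 1 / C₁ := by
      rw [hcoe']
      refine (diagOp_norm_le _ _ hg').trans ?_
      rw [one_div]
      exact inv_anti₀ hC₁ hs1
    exact max_le (h1.trans (le_max_right _ _)) (h2.trans (le_max_left _ _))

end Bwd


/-- the weighted left creation operators associated with `f` and `f'` are
similar, `W_i = X⁻¹ W_i' X`, if and only if there are constants `0 < C₁ ≤ C₂` with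
`C₁ ≤ b_α/b_α' ≤ C₂` for all `α`; moreover `X` can then be chosen with
`max{‖X‖, ‖X⁻¹‖} ≤ max{1/C₁, C₂}`. -/
theorem weightedShift_similar_iff {n : ℕ} (a a' : Word n → ℝ)
    (hreg : PosRegular a) (hreg' : PosRegular a')
    (W W' : Fin n → Fock n →L[ℂ] Fock n)
    (hW : IsWeightedShift a W) (hW' : IsWeightedShift a' W') :
    ((∃ X : Fock n ≃L[ℂ] Fock n,
        ∀ i : Fin n,
          W i = (X.symm : Fock n →L[ℂ] Fock n) ∘L (W' i ∘L (X : Fock n →L[ℂ] Fock n))) ↔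
      (∃ C₁ C₂ : ℝ, 0 < C₁ ∧ ∀ α : Word n,
        C₁ ≤ bCoeff a α / bCoeff a' α ∧ bCoeff a α / bCoeff a' α ≤ C₂)) ∧
    ∀ C₁ C₂ : ℝ, 0 < C₁ →
      (∀ α : Word n, C₁ ≤ bCoeff a α / bCoeff a' α ∧ bCoeff a α / bCoeff a' α ≤ C₂) →
      ∃ X : Fock n ≃L[ℂ] Fock n,
        (∀ i : Fin n,
          W i = (X.symm : Fock n →L[ℂ] Fock n) ∘L (W' i ∘L (X : Fock n →L[ℂ] Fock n))) ∧
        max ‖(X : Fock n →L[ℂ] Fock n)‖ ‖(X.symm : Fock n →L[ℂ] Fock n)‖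
          ≤ max (1 / C₁) C₂ := by
  constructor
  · constructor
    · rintro ⟨X, hX⟩
      exact fwd_main hreg hreg' hW hW' X hX
    · rintro ⟨C₁, C₂, h1, h2⟩
      obtain ⟨X, hX, -⟩ := bwd_main hreg hreg' hW hW' C₁ C₂ h1 h2
      exact ⟨X, hX⟩
  · intro C₁ C₂ h1 h2
    exact bwd_main hreg hreg' hW hW' C₁ C₂ h1 h2

end NCDomain
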